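/- arXiv:1003.2930 — 2 statements merged into one kernel-verified Lean document; each statement's English description precedes it below -/
import Mathlib

section
/- Semicontinuity of the intervention operator: let T > 0 and let u : [0,T] × Ō → ℝ be such that (t,x,y) ↦ u(t,x,y,z) is continuous for each z ∈ K. Then for each z ∈ K: (i) the map (t,x,y) ↦ (Su)(t,x,y,z), with values in ℝ ∪ {−∞}, is upper semicontinuous on {(t,x,y) : (t,x,y,z) ∈ [0,T] × Ō}; (ii) for each fixed y (with (x,y,z) ∈ Ō), the map (t,x) ↦ (Su)(t,x,y,z) is continuous on its domain. -/
open scoped Classical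

/-- The set of admissible stock positions `K = {-C₂, …, C₃}`. -/
noncomputable def Kset (C₂ C₃ : ℕ) : Finset ℤ := Finset.Icc (-(C₂ : ℤ)) (C₃ : ℤ)

/-- The set of admissible post-transaction positions
`Γ(y,z) = {z̃ ∈ K : z̃ ≠ z, c(z̃ - z) + c(-z̃) ≤ y}`. -/
noncomputable def Gamma (C₂ C₃ : ℕ) (c : ℤ → ℝ) (y : ℝ) (z : ℤ) : Finset ℤ :=
  (Kset C₂ C₃).filter fun z' => z' ≠ z ∧ c (z' - z) + c (-z') ≤ y

/-- The closed solvency region `Ō = {(x,y,z) : x ≥ 0, y ≥ c(-z), z ∈ K}`. -/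
def Obar (C₂ C₃ : ℕ) (c : ℤ → ℝ) : Set (ℝ × ℝ × ℤ) :=
  {p | 0 ≤ p.1 ∧ c (-p.2.2) ≤ p.2.1 ∧ p.2.2 ∈ Kset C₂ C₃}

/-- The intervention operator with values in `ℝ ∪ {-∞} ⊆ EReal`:
`(Su)(t,x,y,z) = max_{z̃ ∈ Γ(y,z)} u(t, x, y - c(z̃ - z), z̃)`, `-∞` if `Γ(y,z) = ∅`. -/
noncomputable def SopE (C₂ C₃ : ℕ) (c : ℤ → ℝ) (u : ℝ → ℝ → ℝ → ℤ → ℝ)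
    (t x y : ℝ) (z : ℤ) : EReal :=
  (Gamma C₂ C₃ c y z).sup fun z' => ((u t x (y - c (z' - z)) z' : ℝ) : EReal)

/-!
A transaction `z̃` is affordable at cash `y` iff `c(z̃ - z) + c(-z̃) ≤ y`, a closed condition in `y`.
So a transaction unaffordable at `y₀` stays unaffordable nearby, and near `(t₀, x₀, y₀)` the value
`Su` is a maximum over a subfamily of the finitely many branches affordable at `y₀`. Each branch is
continuous on the region where it is affordable, so the maximum can only drop in the limit: this
is upper semicontinuity. For fixed `y` the family `Γ(y, z)` does not move, and `Su` is a finite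
maximum of continuous functions of `(t, x)`.
-/
open Filter Topology

theorem upperSemicontinuousWithinAt_finset_sup_filter_mem {α β ι : Type*} [TopologicalSpace α]
    [LinearOrder β] [OrderBot β] {s : Finset ι} {A : ι → Set α} {f : ι → α → β} {S : Set α}
    {x : α} (hA : ∀ i ∈ s, IsClosed (A i))
    (hf : ∀ i ∈ s, x ∈ A i → UpperSemicontinuousWithinAt (f i) (S ∩ A i) x) :
    UpperSemicontinuousWithinAt (fun p => (s.filter (p ∈ A ·)).sup (f · p)) S x := by
  intro b hb
  have hbot : ⊥ < b := bot_le.trans_lt hb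
  have hbranch : ∀ i ∈ s, ∀ᶠ p in 𝓝[S] x, p ∈ A i → f i p < b := by
    intro i hi
    by_cases hx : x ∈ A i
    · have := hf i hi hx b ((Finset.le_sup (Finset.mem_filter.2 ⟨hi, hx⟩)).trans_lt hb)
      rwa [nhdsWithin_inter', eventually_inf_principal] at this
    · filter_upwards [mem_nhdsWithin_of_mem_nhds ((hA i hi).isOpen_compl.mem_nhds hx)]
        with p hp hpA using absurd hpA hp
  filter_upwards [(eventually_all_finset s).2 hbranch] with p hp
  rw [Finset.sup_lt_iff hbot]
  intro i hi
  obtain ⟨his, hpA⟩ := Finset.mem_filter.1 hi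
  exact hp i his hpA

section Intervention

variable {C₂ C₃ : ℕ} {c : ℤ → ℝ}

theorem mem_Gamma {y : ℝ} {z z' : ℤ} :
    z' ∈ Gamma C₂ C₃ c y z ↔ z' ∈ Kset C₂ C₃ ∧ z' ≠ z ∧ c (z' - z) + c (-z') ≤ y := by
  simp [Gamma]

theorem Gamma_eq_filter_filter (y : ℝ) (z : ℤ) :
    Gamma C₂ C₃ c y z =
      ((Kset C₂ C₃).filter (· ≠ z)).filter fun z' => c (z' - z) + c (-z') ≤ y := by
  ext z'
  simp [mem_Gamma, and_assoc]

theorem continuousOn_intervention_branch {T : ℝ} {u : ℝ → ℝ → ℝ → ℤ → ℝ}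
    (hucont : ∀ z ∈ Kset C₂ C₃, ContinuousOn (fun p : ℝ × ℝ × ℝ => u p.1 p.2.1 p.2.2 z)
      {p : ℝ × ℝ × ℝ | p.1 ∈ Set.Icc 0 T ∧ (p.2.1, p.2.2, z) ∈ Obar C₂ C₃ c})
    {z z' : ℤ} (hz' : z' ∈ Kset C₂ C₃) :
    ContinuousOn (fun p : ℝ × ℝ × ℝ => u p.1 p.2.1 (p.2.2 - c (z' - z)) z')
      {p : ℝ × ℝ × ℝ | p.1 ∈ Set.Icc 0 T ∧ 0 ≤ p.2.1 ∧ c (z' - z) + c (-z') ≤ p.2.2} :=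
  (hucont z' hz').comp (f := fun p : ℝ × ℝ × ℝ => (p.1, p.2.1, p.2.2 - c (z' - z))) (by fun_prop)
    fun _ ⟨ht, hx, hy⟩ => ⟨ht, hx, show c (-z') ≤ _ by linarith, hz'⟩

end Intervention

theorem Sop_semicontinuous_general (C₂ C₃ : ℕ)
    (c : ℤ → ℝ)
    (T : ℝ)
    (u : ℝ → ℝ → ℝ → ℤ → ℝ)
    (hucont : ∀ z ∈ Kset C₂ C₃, ContinuousOn (fun p : ℝ × ℝ × ℝ => u p.1 p.2.1 p.2.2 z)
      {p : ℝ × ℝ × ℝ | p.1 ∈ Set.Icc 0 T ∧ (p.2.1, p.2.2, z) ∈ Obar C₂ C₃ c})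
    (z : ℤ) :
    UpperSemicontinuousOn (fun p : ℝ × ℝ × ℝ => SopE C₂ C₃ c u p.1 p.2.1 p.2.2 z)
      {p : ℝ × ℝ × ℝ | p.1 ∈ Set.Icc 0 T ∧ (p.2.1, p.2.2, z) ∈ Obar C₂ C₃ c} ∧
    ∀ y : ℝ, c (-z) ≤ y →
      ContinuousOn (fun q : ℝ × ℝ => SopE C₂ C₃ c u q.1 q.2 y z)
        (Set.Icc 0 T ×ˢ Set.Ici (0 : ℝ)) := by
  refine ⟨fun p hp => ?_, fun y _ => ?_⟩
  · simp only [SopE, Gamma_eq_filter_filter]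
    refine upperSemicontinuousWithinAt_finset_sup_filter_mem
      (A := fun z' => {q : ℝ × ℝ × ℝ | c (z' - z) + c (-z') ≤ q.2.2})
      (fun _ _ => isClosed_le continuous_const (by fun_prop)) fun z' hz' hpA => ?_
    have hbranch :=
      continuousOn_intervention_branch (z := z) hucont (Finset.mem_filter.1 hz').1
    refine ContinuousWithinAt.upperSemicontinuousWithinAt ?_
    exact (continuous_coe_real_ereal.comp_continuousOn hbranch p ⟨hp.1, hp.2.1, hpA⟩).mono
      fun q hq => ⟨hq.1.1, hq.1.2.1, hq.2⟩
  · refine ContinuousOn.finset_sup_apply fun z' hz' =>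
      continuous_coe_real_ereal.comp_continuousOn
        ((continuousOn_intervention_branch hucont (mem_Gamma.1 hz').1).comp
          (f := fun q : ℝ × ℝ => (q.1, q.2, y)) (by fun_prop)
          fun q hq => ⟨hq.1, hq.2, (mem_Gamma.1 hz').2.2⟩)

/-- Semicontinuity of the intervention operator: if `u(·,·,·,z)` is continuous for every
`z ∈ K`, then (i) `(t,x,y) ↦ (Su)(t,x,y,z)` is upper semicontinuous on
`{(t,x,y) : (t,x,y,z) ∈ [0,T] × Ō}`, and (ii) for each fixed admissible `y`,
`(t,x) ↦ (Su)(t,x,y,z)` is continuous on its domain `[0,T] × [0,∞)`. -/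
theorem Sop_semicontinuous (C₂ C₃ : ℕ) (hC₂ : 0 < C₂) (hC₃ : 0 < C₃)
    (c : ℤ → ℝ) (hc0 : c 0 = 0) (hcpos : ∀ z : ℤ, z ≠ 0 → 0 < c z)
    (T : ℝ) (hT : 0 < T)
    (u : ℝ → ℝ → ℝ → ℤ → ℝ)
    (hucont : ∀ z ∈ Kset C₂ C₃, ContinuousOn (fun p : ℝ × ℝ × ℝ => u p.1 p.2.1 p.2.2 z)
      {p : ℝ × ℝ × ℝ | p.1 ∈ Set.Icc 0 T ∧ (p.2.1, p.2.2, z) ∈ Obar C₂ C₃ c})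
    (z : ℤ) (hz : z ∈ Kset C₂ C₃) :
    UpperSemicontinuousOn (fun p : ℝ × ℝ × ℝ => SopE C₂ C₃ c u p.1 p.2.1 p.2.2 z)
      {p : ℝ × ℝ × ℝ | p.1 ∈ Set.Icc 0 T ∧ (p.2.1, p.2.2, z) ∈ Obar C₂ C₃ c} ∧
    ∀ y : ℝ, c (-z) ≤ y →
      ContinuousOn (fun q : ℝ × ℝ => SopE C₂ C₃ c u q.1 q.2 y z)
        (Set.Icc 0 T ×ˢ Set.Ici (0 : ℝ)) :=
  Sop_semicontinuous_general C₂ C₃ c T u hucont z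
end

section
/- Openness of the no-action region: let T > 0 and let u : [0,T] × Ō → ℝ be such that (t,x,y) ↦ u(t,x,y,z) is continuous for each z ∈ K. Then for each z ∈ K, the no-action region A[u](z) = {(t,x,y) : t ∈ (0,T), (x,y,z) ∈ O, and u(t,x,y,z) > (Su)(t,x,y,z)} is an open subset of ℝ³ (points where Γ(y,z) = ∅ belong to A[u](z) by the convention Su = −∞ there). -/
open scoped Classical

open Topology Filter

/-! Near a point `(t, x, y)`, the set `Γ(y', z)` can only shrink, because each constraint
`c(z̃ - z) + c(-z̃) ≤ y'` is closed; so every `z̃` still admissible near the point was admissible at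
it, and continuity of the finitely many functions `u(·, z̃)` preserves each strict inequality
`u(t, x, y - c(z̃ - z), z̃) < u(t, x, y, z)`. -/

section ImplicationRegion

variable {X α ι : Type*} [TopologicalSpace X] [LinearOrder α] [TopologicalSpace α]
  [OrderClosedTopology α] {U F : Set X} {f g : X → α}

lemma eventually_mem_imp_lt {x : X} (hU : U ∈ 𝓝 x) (hF : IsClosed F) (hf : ContinuousAt f x)
    (hg : ContinuousOn g (F ∩ U)) (hx : x ∈ F → g x < f x) :
    ∀ᶠ y in 𝓝 x, y ∈ F → g y < f y := by
  by_cases hxF : x ∈ F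
  · have hgF : ContinuousWithinAt g F x :=
      (continuousWithinAt_inter hU).1 (hg.continuousWithinAt ⟨hxF, mem_of_mem_nhds hU⟩)
    exact eventually_nhdsWithin_iff.1 <|
      hgF.tendsto.eventually_lt (hf.tendsto.mono_left nhdsWithin_le_nhds) (hx hxF)
  · filter_upwards [hF.isOpen_compl.mem_nhds hxF] with y hyF hy using absurd hy hyF

lemma isOpen_sep_forall_mem_imp_lt (s : Finset ι) {F : ι → Set X} {g : ι → X → α}
    (hU : IsOpen U) (hf : ContinuousOn f U) (hF : ∀ i ∈ s, IsClosed (F i))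
    (hg : ∀ i ∈ s, ContinuousOn (g i) (F i ∩ U)) :
    IsOpen {x ∈ U | ∀ i ∈ s, x ∈ F i → g i x < f x} := by
  refine isOpen_iff_mem_nhds.2 fun x ⟨hxU, hx⟩ => ?_
  have hU' := hU.mem_nhds hxU
  filter_upwards [hU', (eventually_all_finset s).2 fun i hi =>
    eventually_mem_imp_lt hU' (hF i hi) (hf.continuousAt hU') (hg i hi) (hx i hi)]
    with y hyU hy using ⟨hyU, hy⟩

end ImplicationRegion

lemma sopE_lt_coe_iff {C₂ C₃ : ℕ} {c : ℤ → ℝ} {u : ℝ → ℝ → ℝ → ℤ → ℝ} {t x y a : ℝ} {z : ℤ} :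
    SopE C₂ C₃ c u t x y z < a ↔
      ∀ z' ∈ (Kset C₂ C₃).erase z, c (z' - z) + c (-z') ≤ y → u t x (y - c (z' - z)) z' < a := by
  simp only [SopE, Gamma, Finset.sup_lt_iff (EReal.bot_lt_coe a), Finset.mem_filter,
    Finset.mem_erase, EReal.coe_lt_coe_iff, and_imp]
  exact ⟨fun h z' hne hz' => h z' hz' hne, fun h z' hz' hne => h z' hne hz'⟩

theorem no_action_region_isOpen_general (C₂ C₃ : ℕ) (c : ℤ → ℝ) (T : ℝ) (u : ℝ → ℝ → ℝ → ℤ → ℝ)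
    (hucont : ∀ z ∈ Kset C₂ C₃, ContinuousOn (fun p : ℝ × ℝ × ℝ => u p.1 p.2.1 p.2.2 z)
      {p : ℝ × ℝ × ℝ | p.1 ∈ Set.Icc 0 T ∧ (p.2.1, p.2.2, z) ∈ Obar C₂ C₃ c})
    (z : ℤ) (hz : z ∈ Kset C₂ C₃) :
    IsOpen {p : ℝ × ℝ × ℝ | p.1 ∈ Set.Ioo 0 T ∧ 0 < p.2.1 ∧ c (-z) < p.2.2 ∧
      SopE C₂ C₃ c u p.1 p.2.1 p.2.2 z < ((u p.1 p.2.1 p.2.2 z : ℝ) : EReal)} := by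
  set U := {p : ℝ × ℝ × ℝ | p.1 ∈ Set.Ioo 0 T ∧ 0 < p.2.1 ∧ c (-z) < p.2.2}
  have hU : IsOpen U := (isOpen_Ioo.preimage continuous_fst).and <|
    (isOpen_lt continuous_const (by fun_prop)).and (isOpen_lt continuous_const (by fun_prop))
  have hU_sub : ∀ p ∈ U, p.1 ∈ Set.Icc 0 T ∧ 0 ≤ p.2.1 :=
    fun p ⟨ht, hx, _⟩ => ⟨Set.Ioo_subset_Icc_self ht, hx.le⟩
  have hf : ContinuousOn (fun p : ℝ × ℝ × ℝ => u p.1 p.2.1 p.2.2 z) U :=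
    (hucont z hz).mono fun p hp => ⟨(hU_sub p hp).1, (hU_sub p hp).2, hp.2.2.le, hz⟩
  have hg : ∀ z' ∈ (Kset C₂ C₃).erase z,
      ContinuousOn (fun p : ℝ × ℝ × ℝ => u p.1 p.2.1 (p.2.2 - c (z' - z)) z')
        ({p | c (z' - z) + c (-z') ≤ p.2.2} ∩ U) := fun z' hz' =>
    (hucont z' (Finset.mem_of_mem_erase hz')).comp
      (f := fun p : ℝ × ℝ × ℝ => (p.1, p.2.1, p.2.2 - c (z' - z))) (by fun_prop)
      fun p ⟨hcost, hp⟩ =>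
      ⟨(hU_sub p hp).1, (hU_sub p hp).2, le_sub_iff_add_le'.2 hcost, Finset.mem_of_mem_erase hz'⟩
  convert isOpen_sep_forall_mem_imp_lt _ hU hf
    (fun z' _ => isClosed_le continuous_const (by fun_prop)) hg using 1
  ext p
  simp only [Set.mem_ofPred_eq, sopE_lt_coe_iff, U, and_assoc]

/-- Openness of the no-action region: if `u(·,·,·,z)` is continuous for each `z ∈ K`,
then `A[u](z) = {(t,x,y) : t ∈ (0,T), (x,y,z) ∈ O, u(t,x,y,z) > (Su)(t,x,y,z)}`
is an open subset of `ℝ³` (points with `Γ(y,z) = ∅` belong to it since `Su = -∞` there). -/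
theorem no_action_region_isOpen (C₂ C₃ : ℕ) (hC₂ : 0 < C₂) (hC₃ : 0 < C₃)
    (c : ℤ → ℝ) (hc0 : c 0 = 0) (hcpos : ∀ z : ℤ, z ≠ 0 → 0 < c z)
    (T : ℝ) (hT : 0 < T)
    (u : ℝ → ℝ → ℝ → ℤ → ℝ)
    (hucont : ∀ z ∈ Kset C₂ C₃, ContinuousOn (fun p : ℝ × ℝ × ℝ => u p.1 p.2.1 p.2.2 z)
      {p : ℝ × ℝ × ℝ | p.1 ∈ Set.Icc 0 T ∧ (p.2.1, p.2.2, z) ∈ Obar C₂ C₃ c})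
    (z : ℤ) (hz : z ∈ Kset C₂ C₃) :
    IsOpen {p : ℝ × ℝ × ℝ | p.1 ∈ Set.Ioo 0 T ∧ 0 < p.2.1 ∧ c (-z) < p.2.2 ∧
      SopE C₂ C₃ c u p.1 p.2.1 p.2.2 z < ((u p.1 p.2.1 p.2.2 z : ℝ) : EReal)} :=
  no_action_region_isOpen_general C₂ C₃ c T u hucont z hz
end
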